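/- arXiv:2411.07627 — 2 statements merged into one kernel-verified Lean document; each statement's English description precedes it below -/
import Mathlib

section
/- Let $v : \mathbb{R} \to \mathbb{R}$ be a polynomial of degree at most $p$. Let $t_1, \dots, t_p$ be pairwise distinct reals all distinct from $t_{n-1}$, set $h_m = t_m - t_{n-1}$, $D_m = v(t_m) - v(t_{n-1})$, and let $B_1, \dots, B_p$ be the unique solution of $\sum_m B_m h_m^i = \frac{(t_n - t_{n-1})^{i+1}}{i+1}$ for $i = 1, \dots, p$. Then the flow-solver step is exact: $\int_{t_{n-1}}^{t_n} v(s)\,ds = (t_n - t_{n-1}) v(t_{n-1}) + \sum_{m=1}^{p} B_m D_m$. -/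
theorem flow_solver_exact_on_polynomials (p : ℕ) (v : Polynomial ℝ)
    (hdeg : v.natDegree ≤ p) (tₙ₁ tₙ : ℝ) (t : Fin p → ℝ) (B : Fin p → ℝ)
    (hdist : Function.Injective t) (hne : ∀ m, t m ≠ tₙ₁)
    (hB : ∀ i : Fin p,
      ∑ m, B m * (t m - tₙ₁) ^ ((i : ℕ) + 1) =
        (tₙ - tₙ₁) ^ ((i : ℕ) + 2) / ((i : ℕ) + 2)) :
    (∫ s in tₙ₁..tₙ, v.eval s) =
      (tₙ - tₙ₁) * v.eval tₙ₁ + ∑ m, B m * (v.eval (t m) - v.eval tₙ₁) := by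
  set a : ℕ → ℝ := fun k => (Polynomial.taylor tₙ₁ v).coeff k with ha
  have hdeg' : (Polynomial.taylor tₙ₁ v).natDegree < p + 1 := by
    rw [Polynomial.natDegree_taylor]; omega
  have heval : ∀ x : ℝ, v.eval x = ∑ k ∈ Finset.range (p + 1), a k * (x - tₙ₁) ^ k := by
    intro x
    have h1 : v.eval x = (Polynomial.taylor tₙ₁ v).eval (x - tₙ₁) := by
      rw [Polynomial.taylor_eval]; ring_nf
    rw [h1, Polynomial.eval_eq_sum_range' hdeg']
  have ha0 : v.eval tₙ₁ = a 0 := by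
    rw [heval tₙ₁, Finset.sum_range_succ']
    simp
  have hint : ∀ k : ℕ, (∫ s in tₙ₁..tₙ, (s - tₙ₁) ^ k)
      = (tₙ - tₙ₁) ^ (k + 1) / (k + 1) := by
    intro k
    rw [intervalIntegral.integral_comp_sub_right (fun x => x ^ k) tₙ₁,
      integral_pow]
    simp
  have hLHS : (∫ s in tₙ₁..tₙ, v.eval s)
      = ∑ k ∈ Finset.range (p + 1), a k * ((tₙ - tₙ₁) ^ (k + 1) / (k + 1)) := by
    simp_rw [heval]
    rw [intervalIntegral.integral_finset_sum]
    · refine Finset.sum_congr rfl fun k _ => ?_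
      rw [intervalIntegral.integral_const_mul, hint]
    · intro k _
      exact ((continuous_const.mul
        ((continuous_id.sub continuous_const).pow k)).intervalIntegrable _ _)
  have hD : ∀ x : ℝ, v.eval x - v.eval tₙ₁
      = ∑ k ∈ Finset.range p, a (k + 1) * (x - tₙ₁) ^ (k + 1) := by
    intro x
    rw [heval x, ha0, Finset.sum_range_succ']
    simp
  have hRHS : ∑ m, B m * (v.eval (t m) - v.eval tₙ₁)
      = ∑ k ∈ Finset.range p, a (k + 1) * ((tₙ - tₙ₁) ^ (k + 2) / (k + 2)) := by
    simp_rw [hD, Finset.mul_sum]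
    rw [Finset.sum_comm]
    refine Finset.sum_congr rfl fun k hk => ?_
    have hk' : k < p := Finset.mem_range.mp hk
    have := hB ⟨k, hk'⟩
    simp only [Fin.val_mk] at this
    calc ∑ m : Fin p, B m * (a (k + 1) * (t m - tₙ₁) ^ (k + 1))
        = a (k + 1) * ∑ m : Fin p, B m * (t m - tₙ₁) ^ (k + 1) := by
          rw [Finset.mul_sum]; refine Finset.sum_congr rfl fun m _ => ?_; ring
      _ = a (k + 1) * ((tₙ - tₙ₁) ^ (k + 2) / (k + 2)) := by
          rw [this]
  rw [hLHS, hRHS, ha0, Finset.sum_range_succ']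
  have hcong : ∀ k ∈ Finset.range p,
      a (k + 1) * ((tₙ - tₙ₁) ^ (k + 1 + 1) / (((k + 1 : ℕ) : ℝ) + 1))
        = a (k + 1) * ((tₙ - tₙ₁) ^ (k + 2) / ((k : ℝ) + 2)) := by
    intro k _
    have h2 : k + 1 + 1 = k + 2 := rfl
    rw [h2]
    push_cast
    ring
  rw [Finset.sum_congr rfl hcong]
  push_cast
  ring
end

section
/- Let $h_1, \dots, h_p$ be pairwise distinct nonzero reals and let $B_1, \dots, B_p$ be the solution of $\sum_m B_m h_m^i = C_i$ for $i = 1, \dots, p$. If additionally all $|h_m| \le H$ and $v$ is $(p+1)$-times continuously differentiable with $|v^{(p+1)}| \le M$ on an interval containing all points $t_{n-1} + h_m$, $t_{n-1}$, and $t_n$, then $\left| \int_{t_{n-1}}^{t_n} v(s)\,ds - (t_n - t_{n-1}) v(t_{n-1}) - \sum_{m=1}^p B_m \big(v(t_{n-1} + h_m) - v(t_{n-1})\big) \right| \le \frac{M}{(p+1)!} \left( \frac{|t_n - t_{n-1}|^{p+2}}{p+2} + H^{p+1} \sum_{m=1}^p |B_m| \right)$. -/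
/-!
The error of the step is a linear functional of `v`, and the moment conditions `hB` make it vanish
on polynomials of degree `≤ p`. It therefore equals the error on the Taylor remainder
`R = v - T` of order `p` at `tₙ₁`, which vanishes at `tₙ₁` and, by the Lagrange form, satisfies
`|R x| ≤ M / (p + 1)! * |x - tₙ₁| ^ (p + 1)`. Integrating this bound from `tₙ₁` to `tₙ` gives the
first term; evaluating it at the nodes `tₙ₁ + h m` gives the second.
-/

open MeasureTheory Finset Set
open scoped Nat Interval

theorem abs_sub_taylor_le {f : ℝ → ℝ} {n : ℕ} {c x M : ℝ} (hf : ContDiff ℝ (n + 1) f)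
    (hM : ∀ y ∈ [[c, x]], |iteratedDeriv (n + 1) f y| ≤ M) :
    |f x - ∑ k ∈ range (n + 1), iteratedDeriv k f c / k ! * (x - c) ^ k| ≤
      M * |x - c| ^ (n + 1) / (n + 1)! := by
  rcases eq_or_ne c x with rfl | hcx
  · simp [sum_range_succ']
  obtain ⟨ξ, hξ, hrem⟩ := taylor_mean_remainder_lagrange_iteratedDeriv hcx hf.contDiffOn
  have htaylor : taylorWithinEval f n [[c, x]] c x =
      ∑ k ∈ range (n + 1), iteratedDeriv k f c / k ! * (x - c) ^ k := by
    rw [taylor_within_apply]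
    refine sum_congr rfl fun k hk => ?_
    rw [iteratedDerivWithin_eq_iteratedDeriv (uniqueDiffOn_uIcc hcx)
      (hf.of_le (by exact_mod_cast (mem_range.mp hk).le)).contDiffAt left_mem_uIcc, smul_eq_mul]
    ring
  rw [← htaylor, hrem, abs_div, abs_mul, abs_pow, Nat.abs_cast]
  gcongr
  exact hM ξ (uIoo_subset_uIcc_self hξ)

theorem abs_integral_le_of_abs_le_mul_abs_sub_pow {R : ℝ → ℝ} {c t K : ℝ} {n : ℕ} (hK : 0 ≤ K)
    (hR : ∀ x ∈ [[c, t]], |R x| ≤ K * |x - c| ^ n) :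
    |∫ x in c..t, R x| ≤ K * (|t - c| ^ (n + 1) / (n + 1)) := by
  calc |∫ x in c..t, R x| = ‖∫ x in c..t, R x‖ := rfl
    _ ≤ |∫ x in c..t, K * |x - c| ^ n| :=
        intervalIntegral.norm_integral_le_abs_of_norm_le
          ((ae_restrict_mem measurableSet_uIoc).mono fun x hx => hR x (uIoc_subset_uIcc hx))
          ((by fun_prop : Continuous fun x => K * |x - c| ^ n).intervalIntegrable c t)
    _ = K * (|t - c| ^ (n + 1) / (n + 1)) := by
        rw [intervalIntegral.abs_integral_eq_abs_integral_uIoc, integral_const_mul,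
          integral_pow_abs_sub_uIoc, abs_of_nonneg (by positivity)]

noncomputable def quadratureError {ι : Type*} [Fintype ι] (c t : ℝ) (h B : ι → ℝ) (f : ℝ → ℝ) :
    ℝ :=
  (∫ s in c..t, f s) - (t - c) * f c - ∑ m, B m * (f (c + h m) - f c)

section quadratureError

variable {ι : Type*} [Fintype ι] {c t : ℝ} {h B : ι → ℝ}

theorem quadratureError_sub {f g : ℝ → ℝ} (hf : IntervalIntegrable f volume c t)
    (hg : IntervalIntegrable g volume c t) :
    quadratureError c t h B (fun x => f x - g x) =
      quadratureError c t h B f - quadratureError c t h B g := by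
  have hsum : ∑ m, B m * (f (c + h m) - g (c + h m) - (f c - g c)) =
      ∑ m, B m * (f (c + h m) - f c) - ∑ m, B m * (g (c + h m) - g c) := by
    rw [← sum_sub_distrib]
    exact sum_congr rfl fun m _ => by ring
  simp only [quadratureError, intervalIntegral.integral_sub hf hg, hsum]
  ring

theorem quadratureError_sum_mul {κ : Type*} {s : Finset κ} {a : κ → ℝ} {f : κ → ℝ → ℝ}
    (hf : ∀ k ∈ s, IntervalIntegrable (f k) volume c t) :
    quadratureError c t h B (fun x => ∑ k ∈ s, a k * f k x) =
      ∑ k ∈ s, a k * quadratureError c t h B (f k) := by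
  simp only [quadratureError, intervalIntegral.integral_finsetSum
    fun k hk => (hf k hk).const_mul (a k), intervalIntegral.integral_const_mul, mul_sum,
    ← sum_sub_distrib, mul_sub]
  rw [sum_comm]
  simp only [← sum_sub_distrib, mul_left_comm (B _)]
  exact sum_congr rfl fun k _ => by ring

theorem quadratureError_pow_sub_eq_zero {p k : ℕ} (hk : k ≤ p)
    (hB : ∀ i : Fin p, ∑ m, B m * h m ^ ((i : ℕ) + 1) = (t - c) ^ ((i : ℕ) + 2) / ((i : ℕ) + 2)) :
    quadratureError c t h B (fun x => (x - c) ^ k) = 0 := by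
  rcases k with _ | k
  · simp [quadratureError]
  · have := hB ⟨k, hk⟩
    simp [quadratureError, intervalIntegral.integral_comp_sub_right fun x => x ^ (k + 1), this]
    ring

theorem quadratureError_polynomial_eq_zero {p : ℕ} (a : ℕ → ℝ)
    (hB : ∀ i : Fin p, ∑ m, B m * h m ^ ((i : ℕ) + 1) = (t - c) ^ ((i : ℕ) + 2) / ((i : ℕ) + 2)) :
    quadratureError c t h B (fun x => ∑ k ∈ range (p + 1), a k * (x - c) ^ k) = 0 := by
  rw [quadratureError_sum_mul fun k _ =>
    (by fun_prop : Continuous fun x => (x - c) ^ k).intervalIntegrable c t]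
  exact sum_eq_zero fun k hk => by
    rw [quadratureError_pow_sub_eq_zero (mem_range_succ_iff.mp hk) hB, mul_zero]

theorem abs_quadratureError_le {R : ℝ → ℝ} {a b K H : ℝ} {n : ℕ} (hK : 0 ≤ K) (hR₀ : R c = 0)
    (hc : c ∈ Icc a b) (ht : t ∈ Icc a b) (hch : ∀ m, c + h m ∈ Icc a b) (hH : ∀ m, |h m| ≤ H)
    (hR : ∀ x ∈ Icc a b, |R x| ≤ K * |x - c| ^ n) :
    |quadratureError c t h B R| ≤ K * (|t - c| ^ (n + 1) / (n + 1) + H ^ n * ∑ m, |B m|) := by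
  have hnodes : ∀ m, |R (c + h m)| ≤ K * H ^ n := fun m => by
    calc |R (c + h m)| ≤ K * |h m| ^ n := by simpa using hR _ (hch m)
      _ ≤ K * H ^ n := by gcongr; exact hH m
  have hsum : |∑ m, B m * R (c + h m)| ≤ K * (H ^ n * ∑ m, |B m|) := by
    calc |∑ m, B m * R (c + h m)| ≤ ∑ m, |B m| * (K * H ^ n) :=
          (abs_sum_le_sum_abs _ _).trans (sum_le_sum fun m _ => by
            rw [abs_mul]; gcongr; exact hnodes m)
      _ = K * (H ^ n * ∑ m, |B m|) := by rw [← sum_mul]; ring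
  have hint : |∫ x in c..t, R x| ≤ K * (|t - c| ^ (n + 1) / (n + 1)) :=
    abs_integral_le_of_abs_le_mul_abs_sub_pow hK fun x hx => hR x (uIcc_subset_Icc hc ht hx)
  simp only [quadratureError, hR₀, mul_zero, sub_zero]
  calc _ ≤ |∫ x in c..t, R x| + |∑ m, B m * R (c + h m)| := abs_sub _ _
    _ ≤ _ := by rw [mul_add]; exact add_le_add hint hsum

end quadratureError

theorem flow_solver_quantitative_error_bound_general (p : ℕ) (v : ℝ → ℝ)
    (tₙ₁ tₙ H M a b : ℝ) (h : Fin p → ℝ) (B : Fin p → ℝ)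
    (hH : ∀ m, |h m| ≤ H)
    (hB : ∀ i : Fin p,
      ∑ m, B m * h m ^ ((i : ℕ) + 1) =
        (tₙ - tₙ₁) ^ ((i : ℕ) + 2) / ((i : ℕ) + 2))
    (hv : ContDiff ℝ (p + 1) v)
    (hmem₁ : ∀ m, tₙ₁ + h m ∈ Set.Icc a b)
    (hmem₂ : tₙ₁ ∈ Set.Icc a b) (hmem₃ : tₙ ∈ Set.Icc a b)
    (hM : ∀ s ∈ Set.Icc a b, |iteratedDeriv (p + 1) v s| ≤ M) :
    |(∫ s in tₙ₁..tₙ, v s) - (tₙ - tₙ₁) * v tₙ₁ -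
        ∑ m, B m * (v (tₙ₁ + h m) - v tₙ₁)| ≤
      M / (Nat.factorial (p + 1) : ℝ) *
        (|tₙ - tₙ₁| ^ (p + 2) / (p + 2) + H ^ (p + 1) * ∑ m, |B m|) := by
  set T : ℝ → ℝ := fun x => ∑ k ∈ range (p + 1), iteratedDeriv k v tₙ₁ / k ! * (x - tₙ₁) ^ k
  have hT : Continuous T := by fun_prop
  have hM₀ : 0 ≤ M := (abs_nonneg _).trans (hM tₙ₁ hmem₂)
  have hremainder :
      quadratureError tₙ₁ tₙ h B v = quadratureError tₙ₁ tₙ h B (fun x => v x - T x) := by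
    rw [quadratureError_sub (hv.continuous.intervalIntegrable _ _) (hT.intervalIntegrable _ _),
      quadratureError_polynomial_eq_zero _ hB, sub_zero]
  have hR₀ : v tₙ₁ - T tₙ₁ = 0 := by simp [T, sum_range_succ']
  have htaylor : ∀ x ∈ Icc a b, |v x - T x| ≤ M / (p + 1)! * |x - tₙ₁| ^ (p + 1) := fun x hx => by
    rw [div_mul_eq_mul_div]
    exact abs_sub_taylor_le hv fun y hy => hM y (uIcc_subset_Icc hmem₂ hx hy)
  calc |quadratureError tₙ₁ tₙ h B v|
      = |quadratureError tₙ₁ tₙ h B (fun x => v x - T x)| := by rw [hremainder]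
    _ ≤ M / (p + 1)! * (|tₙ - tₙ₁| ^ (p + 1 + 1) / ((p + 1 : ℕ) + 1) + H ^ (p + 1) * ∑ m, |B m|) :=
        abs_quadratureError_le (div_nonneg hM₀ (by positivity)) hR₀ hmem₂ hmem₃ hmem₁ hH htaylor
    _ = _ := by push_cast; ring

theorem flow_solver_quantitative_error_bound (p : ℕ) (v : ℝ → ℝ)
    (tₙ₁ tₙ H M a b : ℝ) (h : Fin p → ℝ) (B : Fin p → ℝ)
    (hdist : Function.Injective h) (hne : ∀ m, h m ≠ 0)
    (hH : ∀ m, |h m| ≤ H)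
    (hB : ∀ i : Fin p,
      ∑ m, B m * h m ^ ((i : ℕ) + 1) =
        (tₙ - tₙ₁) ^ ((i : ℕ) + 2) / ((i : ℕ) + 2))
    (hv : ContDiff ℝ (p + 1) v)
    (hab : a ≤ b)
    (hmem₁ : ∀ m, tₙ₁ + h m ∈ Set.Icc a b)
    (hmem₂ : tₙ₁ ∈ Set.Icc a b) (hmem₃ : tₙ ∈ Set.Icc a b)
    (hM : ∀ s ∈ Set.Icc a b, |iteratedDeriv (p + 1) v s| ≤ M) :
    |(∫ s in tₙ₁..tₙ, v s) - (tₙ - tₙ₁) * v tₙ₁ -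
        ∑ m, B m * (v (tₙ₁ + h m) - v tₙ₁)| ≤
      M / (Nat.factorial (p + 1) : ℝ) *
        (|tₙ - tₙ₁| ^ (p + 2) / (p + 2) + H ^ (p + 1) * ∑ m, |B m|) :=
  flow_solver_quantitative_error_bound_general p v tₙ₁ tₙ H M a b h B hH hB hv hmem₁ hmem₂ hmem₃ hM
end
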